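/- Let S be the symmetric simple random walk on ℤ started at S_0 = 0 (i.i.d. increments equal to ±1 with probability 1/2 each), and let τ = {τ_0 = 0 < τ_1 < τ_2 < ⋯} be its successive return times to 0. Then for every q > 0, lim_{N→∞, N even} E[ Π_{j≥1: τ_j ≤ N} (1 + e^{−(q/N)(τ_j − τ_{j−1})})/2 | S_N = 0 ] = (1 − e^{−q})/q. -/

import Mathlib

/-!
Given `S_{2m} = 0`, the first `2m` steps are uniform over the `C(2m, m)` bridges, so the
conditional expectation is a weighted count of bridges divided by `C(2m, m)`. Cutting a bridge at
its first return to `0` gives a renewal equation; with unit weights it reads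
`C(2m, m) = ∑ₖ fₖ C(2(m-k), m-k)`, which forces the number of first-return paths of length `2k` to
be `fₖ = 2 Cat (k - 1)`. With the weights `(1 + s^t) / 2` the renewal equation becomes the Catalan
convolution satisfied by `Cat m (1 + r + ⋯ + rᵐ)`, `r = s²`; hence the conditional expectation is
exactly `(m + 1)⁻¹ ∑_{j ≤ m} e^{-qj/m}`, a Riemann sum of `∫₀¹ e^{-qx} dx`.
-/

open MeasureTheory ProbabilityTheory Filter Finset

/-- The last return to `0` of the walk `S` strictly before time `n` (the previous zero);
since `S 0 = 0` the set of zeros in `[0, n)` is nonempty and `Finset.sup` is its maximum. -/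
noncomputable def prevZero (S : ℕ → ℤ) (n : ℕ) : ℕ :=
  ((Finset.range n).filter fun m => S m = 0).sup id

/-- The product `∏_{j ≥ 1 : τ_j ≤ N} (1+e^{-(q/N)(τ_j - τ_{j-1})})/2` over the successive
return times to `0` of the walk `S` up to time `N`: each `n ∈ [1,N]` with `S n = 0` is a
return time `τ_j`, and `n - prevZero S n` is the gap `τ_j - τ_{j-1}`. -/
noncomputable def excursionProd (S : ℕ → ℤ) (q : ℝ) (N : ℕ) : ℝ :=
  ∏ n ∈ (Finset.Icc 1 N).filter (fun n => S n = 0),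
    (1 + Real.exp (-(q / (N : ℝ)) * ((n : ℝ) - (prevZero S n : ℝ)))) / 2

namespace SimpleRandomWalk

open scoped Classical

theorem catalan_renewal {R : Type*} [CommSemiring R] (r : R) (m : ℕ) :
    ∑ j ∈ range (m + 1), (catalan j * catalan (m - j) : R) * (1 + r ^ (j + 1)) *
        ∑ i ∈ range (m - j + 1), r ^ i =
      catalan (m + 1) * ∑ i ∈ range (m + 2), r ^ i := by
  have hsplit : ∀ j ≤ m, ∑ i ∈ range (m + 2), r ^ i =
      ∑ i ∈ range (j + 1), r ^ i + r ^ (j + 1) * ∑ i ∈ range (m - j + 1), r ^ i := by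
    intro j hj
    rw [show m + 2 = j + 1 + (m - j + 1) by omega, sum_range_add, mul_sum]
    simp only [pow_add]
  have hreflect : ∑ j ∈ range (m + 1), (catalan j * catalan (m - j) : R) *
        ∑ i ∈ range (m - j + 1), r ^ i =
      ∑ j ∈ range (m + 1), (catalan j * catalan (m - j) : R) * ∑ i ∈ range (j + 1), r ^ i := by
    rw [← sum_range_reflect]
    refine sum_congr rfl fun j hj => ?_
    rw [mem_range] at hj
    rw [show m + 1 - 1 - j = m - j by omega, show m - (m - j) = j by omega,
      mul_comm (catalan _ : R)]
  calc _ = ∑ j ∈ range (m + 1), (catalan j * catalan (m - j) : R) *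
          ∑ i ∈ range (m - j + 1), r ^ i +
        ∑ j ∈ range (m + 1), (catalan j * catalan (m - j) : R) *
          (r ^ (j + 1) * ∑ i ∈ range (m - j + 1), r ^ i) := by
        rw [← sum_add_distrib]
        exact sum_congr rfl fun j _ => by ring
    _ = ∑ j ∈ range (m + 1), (catalan j * catalan (m - j) : R) * ∑ i ∈ range (m + 2), r ^ i := by
        rw [hreflect, ← sum_add_distrib]
        refine sum_congr rfl fun j hj => ?_
        rw [hsplit j (by simpa [Nat.lt_succ_iff] using hj), mul_add]
    _ = _ := by
        rw [← sum_mul, catalan_succ,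
          Fin.sum_univ_eq_sum_range (fun j => catalan j * catalan (m - j))]
        push_cast
        rfl

theorem centralBinom_succ_eq_sum (m : ℕ) :
    (m + 1).centralBinom = ∑ j ∈ range (m + 1), 2 * catalan j * (m - j).centralBinom := by
  have h := catalan_renewal 1 m
  simp only [Nat.cast_id, one_pow, sum_const, card_range, smul_eq_mul, mul_one] at h
  rw [← succ_mul_catalan_eq_centralBinom, mul_comm, ← h]
  refine sum_congr rfl fun j _ => ?_
  rw [← succ_mul_catalan_eq_centralBinom]
  ring

theorem renewal_kernel_unique {R : Type*} [Semiring R] [IsLeftCancelAdd R] {b f g : ℕ → R}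
    (hb : b 0 = 1) (hf : ∀ m, b (m + 1) = ∑ j ∈ range (m + 1), f j * b (m - j))
    (hg : ∀ m, b (m + 1) = ∑ j ∈ range (m + 1), g j * b (m - j)) : f = g := by
  funext n
  induction n using Nat.strong_induction_on with
  | _ n ih =>
    have h := (hf n).symm.trans (hg n)
    rw [sum_range_succ, sum_range_succ, Nat.sub_self, hb, mul_one, mul_one,
      sum_congr rfl fun j hj => by rw [ih j (mem_range.1 hj)]] at h
    exact add_left_cancel h

def partialSum (ε : ℕ → ℤ) (n : ℕ) : ℤ := ∑ i ∈ range n, ε i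

def ofUpSteps (N : ℕ) (A : Finset ℕ) : ℕ → ℤ :=
  fun i => if i < N then if i ∈ A then 1 else -1 else 0

-- A step sequence of length `N` is a function `ℕ → ℤ` vanishing from `N` on, indexed here by
-- its set of up-steps.
noncomputable def steps (N : ℕ) : Finset (ℕ → ℤ) := (range N).powerset.image (ofUpSteps N)

noncomputable def bridges (N : ℕ) : Finset (ℕ → ℤ) := (steps N).filter fun ε => partialSum ε N = 0

theorem mem_bridges {N : ℕ} {ε : ℕ → ℤ} : ε ∈ bridges N ↔ ε ∈ steps N ∧ partialSum ε N = 0 :=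
  mem_filter

theorem mem_steps {N : ℕ} {ε : ℕ → ℤ} :
    ε ∈ steps N ↔ (∀ i < N, ε i = 1 ∨ ε i = -1) ∧ ∀ i, N ≤ i → ε i = 0 := by
  constructor
  · intro h
    obtain ⟨A, -, rfl⟩ := mem_image.1 h
    refine ⟨fun i hi => ?_, fun i hi => ?_⟩
    · by_cases hiA : i ∈ A <;> simp [ofUpSteps, hi, hiA]
    · simp [ofUpSteps, not_lt.2 hi]
  · rintro ⟨hstep, hzero⟩
    refine mem_image.2 ⟨(range N).filter (ε · = 1), mem_powerset.2 (filter_subset _ _),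
      funext fun i => ?_⟩
    by_cases hi : i < N
    · rcases hstep i hi with h | h <;> simp [ofUpSteps, hi, h]
    · simp [ofUpSteps, hi, hzero i (not_lt.1 hi)]

theorem ofUpSteps_injOn (N : ℕ) :
    Set.InjOn (ofUpSteps N) ((range N).powerset : Set (Finset ℕ)) := by
  intro A hA B hB h
  simp only [coe_powerset, Set.mem_preimage, Set.mem_powerset_iff, coe_subset] at hA hB
  ext i
  have hi := congrFun h i
  by_cases hiN : i < N
  · by_cases hiA : i ∈ A <;> by_cases hiB : i ∈ B <;> simp_all [ofUpSteps]
  · exact iff_of_false (fun h => hiN (mem_range.1 (hA h))) (fun h => hiN (mem_range.1 (hB h)))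

theorem partialSum_ofUpSteps {N n : ℕ} (A : Finset ℕ) (hn : n ≤ N) :
    partialSum (ofUpSteps N A) n = 2 * #(range n ∩ A) - n := by
  unfold partialSum
  rw [sum_congr rfl fun i hi => show ofUpSteps N A i = 2 * (if i ∈ A then 1 else 0) - 1 by
    by_cases hiA : i ∈ A <;> simp [ofUpSteps, hiA, (mem_range.1 hi).trans_le hn]]
  simp [sum_sub_distrib, mul_comm]

theorem even_of_partialSum_eq_zero {N n : ℕ} {ε : ℕ → ℤ} (hε : ε ∈ steps N) (hn : n ≤ N)
    (h : partialSum ε n = 0) : Even n := by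
  obtain ⟨A, -, rfl⟩ := mem_image.1 hε
  rw [partialSum_ofUpSteps A hn] at h
  exact ⟨#(range n ∩ A), by omega⟩

theorem card_bridges (m : ℕ) : #(bridges (2 * m)) = m.centralBinom := by
  have hcount : (range (2 * m)).powerset.filter
      (fun A => partialSum (ofUpSteps (2 * m) A) (2 * m) = 0) = powersetCard m (range (2 * m)) := by
    rw [powersetCard_eq_filter]
    refine filter_congr fun A hA => ?_
    rw [partialSum_ofUpSteps A le_rfl, inter_eq_right.2 (mem_powerset.1 hA)]
    omega
  rw [bridges, steps, filter_image, card_image_of_injOn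
    ((ofUpSteps_injOn _).mono (filter_subset _ _)), hcount,
    card_powersetCard, card_range, Nat.centralBinom]

def take (t : ℕ) (ε : ℕ → ℤ) : ℕ → ℤ := fun i => if i < t then ε i else 0

def drop (t : ℕ) (ε : ℕ → ℤ) : ℕ → ℤ := fun i => ε (t + i)

def concat (t : ℕ) (α β : ℕ → ℤ) : ℕ → ℤ := fun i => if i < t then α i else β (i - t)

theorem partialSum_take {t k : ℕ} (ε : ℕ → ℤ) (hk : k ≤ t) :
    partialSum (take t ε) k = partialSum ε k :=
  sum_congr rfl fun i hi => by simp [take, (mem_range.1 hi).trans_le hk]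

theorem partialSum_drop (t : ℕ) (ε : ℕ → ℤ) (k : ℕ) :
    partialSum (drop t ε) k = partialSum ε (t + k) - partialSum ε t := by
  simp only [partialSum, drop, sum_range_add]
  ring

theorem partialSum_concat_of_le {t k : ℕ} (α β : ℕ → ℤ) (hk : k ≤ t) :
    partialSum (concat t α β) k = partialSum α k :=
  sum_congr rfl fun i hi => by simp [concat, (mem_range.1 hi).trans_le hk]

theorem partialSum_concat_of_ge {t k : ℕ} (α β : ℕ → ℤ) (hk : t ≤ k) :
    partialSum (concat t α β) k = partialSum α t + partialSum β (k - t) := by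
  obtain ⟨k, rfl⟩ := Nat.exists_eq_add_of_le hk
  rw [← partialSum_concat_of_le α β le_rfl, Nat.add_sub_cancel_left, partialSum, partialSum,
    partialSum, sum_range_add]
  congr 1
  exact sum_congr rfl fun i _ => by simp [concat]

theorem take_mem_steps {n t : ℕ} {ε : ℕ → ℤ} (hε : ε ∈ steps n) (htn : t ≤ n) :
    take t ε ∈ steps t := by
  rw [mem_steps] at hε ⊢
  exact ⟨fun i hi => by simpa [take, hi] using hε.1 i (by omega),
    fun i hi => by simp [take, not_lt.2 hi]⟩

theorem drop_mem_steps {n t : ℕ} {ε : ℕ → ℤ} (hε : ε ∈ steps n) : drop t ε ∈ steps (n - t) := by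
  rw [mem_steps] at hε ⊢
  exact ⟨fun i hi => hε.1 (t + i) (by omega), fun i hi => hε.2 (t + i) (by omega)⟩

theorem concat_mem_steps {n t : ℕ} {α β : ℕ → ℤ} (hα : α ∈ steps t) (hβ : β ∈ steps (n - t))
    (htn : t ≤ n) : concat t α β ∈ steps n := by
  rw [mem_steps] at hα hβ ⊢
  refine ⟨fun i hi => ?_, fun i hi => ?_⟩
  · by_cases h : i < t
    · simpa [concat, h] using hα.1 i h
    · simpa [concat, h] using hβ.1 (i - t) (by omega)
  · simp only [concat, show ¬i < t by omega, if_false]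
    exact hβ.2 (i - t) (by omega)

theorem concat_take_drop (t : ℕ) (ε : ℕ → ℤ) : concat t (take t ε) (drop t ε) = ε := by
  funext i
  by_cases h : i < t
  · simp [concat, take, h]
  · simp [concat, drop, h, Nat.add_sub_cancel' (not_lt.1 h)]

theorem take_concat {t : ℕ} {α : ℕ → ℤ} (hα : α ∈ steps t) (β : ℕ → ℤ) :
    take t (concat t α β) = α := by
  funext i
  by_cases h : i < t
  · simp [take, concat, h]
  · simp [take, h, (mem_steps.1 hα).2 i (not_lt.1 h)]

theorem drop_concat (t : ℕ) (α β : ℕ → ℤ) : drop t (concat t α β) = β := by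
  funext i
  simp [drop, concat]

theorem prevZero_le (σ : ℕ → ℤ) (n : ℕ) : prevZero σ n ≤ n :=
  Finset.sup_le fun _ hm => (mem_range.1 (mem_filter.1 hm).1).le

theorem prevZero_eq_zero {σ : ℕ → ℤ} {t : ℕ} (hmin : ∀ k, 0 < k → k < t → σ k ≠ 0) :
    prevZero σ t = 0 :=
  Nat.le_zero.1 <| Finset.sup_le fun m hm => by
    simp only [mem_filter, mem_range] at hm
    by_contra h
    exact hmin m (Nat.pos_of_ne_zero (by simpa using h)) hm.1 hm.2

theorem prevZero_add {σ : ℕ → ℤ} {t k : ℕ} (ht : σ t = 0) (hk : 0 < k) :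
    prevZero σ (t + k) = t + prevZero (fun i => σ (t + i)) k := by
  have hne : ((range k).filter fun i => σ (t + i) = 0).Nonempty :=
    ⟨0, by simpa [hk] using ht⟩
  obtain ⟨b, hb, hsup⟩ := exists_mem_eq_sup _ hne id
  change _ = b at hsup
  simp only [mem_filter, mem_range] at hb
  rw [prevZero, prevZero, hsup]
  refine le_antisymm (Finset.sup_le fun m hm => ?_) ?_
  · simp only [mem_filter, mem_range] at hm
    rcases lt_or_ge m t with h | h
    · exact (h.trans_le (Nat.le_add_right t _)).le
    · have : m - t ≤ b := hsup ▸ le_sup (f := id) (mem_filter.2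
        ⟨mem_range.2 (by omega), by rw [Nat.add_sub_cancel' h]; exact hm.2⟩)
      simp only [id_eq]
      omega
  · exact le_sup (f := id) (mem_filter.2 ⟨mem_range.2 (by omega), hb.2⟩)

noncomputable def excursionLengthProd {M : Type*} [CommMonoid M] (φ : ℕ → M) (σ : ℕ → ℤ)
    (N : ℕ) : M :=
  ∏ n ∈ (Icc 1 N).filter (fun n => σ n = 0), φ (n - prevZero σ n)

theorem excursionLengthProd_congr {M : Type*} [CommMonoid M] (φ : ℕ → M) {σ σ' : ℕ → ℤ}
    {N : ℕ} (h : ∀ n ≤ N, σ n = σ' n) :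
    excursionLengthProd φ σ N = excursionLengthProd φ σ' N := by
  have hprev : ∀ n ≤ N, prevZero σ n = prevZero σ' n := fun n hn => by
    rw [prevZero, prevZero, filter_congr fun m hm => by rw [h m (by simp at hm; omega)]]
  rw [excursionLengthProd, excursionLengthProd,
    filter_congr fun n hn => by rw [h n (mem_Icc.1 hn).2]]
  exact prod_congr rfl fun n hn => by rw [hprev n (mem_Icc.1 (mem_filter.1 hn).1).2]

theorem excursionLengthProd_eq_mul {M : Type*} [CommMonoid M] (φ : ℕ → M) {σ : ℕ → ℤ}
    {n t : ℕ} (ht : 0 < t) (htn : t ≤ n) (hzero : σ t = 0)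
    (hmin : ∀ k, 0 < k → k < t → σ k ≠ 0) :
    excursionLengthProd φ σ n = φ t * excursionLengthProd φ (fun i => σ (t + i)) (n - t) := by
  have hzeros : (Icc 1 n).filter (fun m => σ m = 0) =
      insert t (((Icc 1 (n - t)).filter fun k => σ (t + k) = 0).image (t + ·)) := by
    ext m
    simp only [mem_filter, mem_Icc, mem_insert, mem_image]
    constructor
    · rintro ⟨⟨h1, h2⟩, h3⟩
      rcases lt_trichotomy m t with h | h | h
      · exact absurd h3 (hmin m h1 h)
      · exact Or.inl h
      · exact Or.inr ⟨m - t, ⟨⟨by omega, by omega⟩, by rwa [Nat.add_sub_cancel' h.le]⟩, by omega⟩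
    · rintro (rfl | ⟨k, ⟨⟨hk1, hk2⟩, hk3⟩, rfl⟩)
      · exact ⟨⟨ht, htn⟩, hzero⟩
      · exact ⟨⟨by omega, by omega⟩, hk3⟩
  rw [excursionLengthProd, hzeros, prod_insert (by simp), prod_image (by simp),
    prevZero_eq_zero hmin, Nat.sub_zero, excursionLengthProd]
  congr 1
  refine prod_congr rfl fun k hk => ?_
  rw [prevZero_add hzero (mem_Icc.1 (mem_filter.1 hk).1).1]
  congr 1
  omega

noncomputable def firstReturn (σ : ℕ → ℤ) : ℕ := sInf {k | 0 < k ∧ σ k = 0}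

theorem firstReturn_spec {σ : ℕ → ℤ} {n : ℕ} (hn : 0 < n) (h : σ n = 0) :
    0 < firstReturn σ ∧ firstReturn σ ≤ n ∧ σ (firstReturn σ) = 0 ∧
      ∀ k, 0 < k → k < firstReturn σ → σ k ≠ 0 := by
  have hmem : n ∈ {k | 0 < k ∧ σ k = 0} := ⟨hn, h⟩
  obtain ⟨hpos, hzero⟩ := Nat.sInf_mem ⟨n, hmem⟩
  exact ⟨hpos, Nat.sInf_le hmem, hzero, fun k hk hlt h0 => Nat.notMem_of_lt_sInf hlt ⟨hk, h0⟩⟩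

theorem firstReturn_eq {σ : ℕ → ℤ} {t : ℕ} (ht : 0 < t) (hzero : σ t = 0)
    (hmin : ∀ k, 0 < k → k < t → σ k ≠ 0) : firstReturn σ = t :=
  le_antisymm (Nat.sInf_le ⟨ht, hzero⟩) <| le_csInf ⟨t, ht, hzero⟩ fun k ⟨hk, hk0⟩ =>
    not_lt.1 fun hlt => hmin k hk hlt hk0

noncomputable def firstReturnPaths (t : ℕ) : Finset (ℕ → ℤ) :=
  (bridges t).filter fun ε => ∀ k, 0 < k → k < t → partialSum ε k ≠ 0

noncomputable def bridgeSum {R : Type*} [CommSemiring R] (φ : ℕ → R) (N : ℕ) : R :=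
  ∑ ε ∈ bridges N, excursionLengthProd φ (partialSum ε) N

theorem mem_firstReturnPaths {t : ℕ} {ε : ℕ → ℤ} :
    ε ∈ firstReturnPaths t ↔
      ε ∈ steps t ∧ partialSum ε t = 0 ∧ ∀ k, 0 < k → k < t → partialSum ε k ≠ 0 := by
  simp only [firstReturnPaths, mem_filter, mem_bridges, and_assoc]

theorem sum_firstReturn_eq_sum_product {M : Type*} [AddCommMonoid M]
    (g : (ℕ → ℤ) → (ℕ → ℤ) → M) {n t : ℕ} (ht : 0 < t) (htn : t ≤ n) :
    ∑ ε ∈ (bridges n).filter (fun ε => firstReturn (partialSum ε) = t), g (take t ε) (drop t ε) =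
      ∑ p ∈ firstReturnPaths t ×ˢ bridges (n - t), g p.1 p.2 := by
  refine sum_nbij' (fun ε => (take t ε, drop t ε)) (fun p => concat t p.1 p.2) ?_ ?_
    (fun ε _ => concat_take_drop t ε) ?_ (fun _ _ => rfl)
  · intro ε hε
    simp only [mem_filter, mem_bridges] at hε
    obtain ⟨⟨hsteps, hn⟩, rfl⟩ := hε
    obtain ⟨hpos, -, hzero, hmin⟩ := firstReturn_spec (by omega) hn
    simp only [mem_product, mem_firstReturnPaths, mem_bridges]
    refine ⟨⟨take_mem_steps hsteps htn, ?_, fun k hk hlt => ?_⟩, drop_mem_steps hsteps, ?_⟩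
    · rwa [partialSum_take ε le_rfl]
    · rw [partialSum_take ε hlt.le]
      exact hmin k hk hlt
    · rwa [partialSum_drop, hzero, sub_zero, Nat.add_sub_cancel' htn]
  · rintro ⟨α, β⟩ hp
    simp only [mem_product, mem_firstReturnPaths, mem_bridges] at hp
    obtain ⟨⟨hα, hαt, hαmin⟩, hβ, hβn⟩ := hp
    simp only [mem_filter, mem_bridges]
    refine ⟨⟨concat_mem_steps hα hβ htn, ?_⟩, firstReturn_eq ht ?_ fun k hk hlt => ?_⟩
    · rw [partialSum_concat_of_ge α β htn, hαt, hβn, add_zero]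
    · rwa [partialSum_concat_of_le α β le_rfl]
    · rw [partialSum_concat_of_le α β hlt.le]
      exact hαmin k hk hlt
  · rintro ⟨α, β⟩ hp
    simp only [mem_product, mem_firstReturnPaths] at hp
    exact Prod.ext (take_concat hp.1.1 β) (drop_concat t α β)

theorem bridgeSum_renewal {R : Type*} [CommSemiring R] (φ : ℕ → R) {n : ℕ} (hn : 0 < n) :
    bridgeSum φ n = ∑ t ∈ Icc 1 n, #(firstReturnPaths t) * φ t * bridgeSum φ (n - t) := by
  rw [bridgeSum, ← sum_fiberwise_of_maps_to (g := fun ε => firstReturn (partialSum ε))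
    (t := Icc 1 n) fun ε hε => ?_]
  · refine sum_congr rfl fun t ht => ?_
    obtain ⟨ht1, htn⟩ := mem_Icc.1 ht
    calc _ = ∑ ε ∈ (bridges n).filter (fun ε => firstReturn (partialSum ε) = t),
          φ t * excursionLengthProd φ (partialSum (drop t ε)) (n - t) := by
          refine sum_congr rfl fun ε hε => ?_
          simp only [mem_filter, mem_bridges] at hε
          obtain ⟨⟨-, hn0⟩, rfl⟩ := hε
          obtain ⟨hpos, hle, hzero, hmin⟩ := firstReturn_spec hn hn0
          rw [excursionLengthProd_eq_mul φ hpos hle hzero hmin]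
          congr 2
          funext i
          rw [partialSum_drop, hzero, sub_zero]
      _ = _ := by
          rw [sum_firstReturn_eq_sum_product (fun _ β => φ t * excursionLengthProd φ
            (partialSum β) (n - t)) ht1 htn]
          simp only [sum_product, sum_const, ← mul_sum, nsmul_eq_mul]
          rw [bridgeSum, mul_left_comm, mul_assoc]
  · obtain ⟨hpos, hle, -⟩ := firstReturn_spec hn (mem_bridges.1 hε).2
    exact mem_Icc.2 ⟨hpos, hle⟩

theorem card_firstReturnPaths_of_odd {t : ℕ} (ht : ¬Even t) : #(firstReturnPaths t) = 0 :=
  card_eq_zero.2 <| eq_empty_of_forall_notMem fun ε hε => by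
    obtain ⟨hsteps, hzero, -⟩ := mem_firstReturnPaths.1 hε
    exact ht (even_of_partialSum_eq_zero hsteps le_rfl hzero)

theorem sum_Icc_two_mul {M : Type*} [AddCommMonoid M] (g : ℕ → M) (hodd : ∀ j, g (2 * j + 1) = 0)
    (m : ℕ) : ∑ t ∈ Icc 1 (2 * m), g t = ∑ j ∈ range m, g (2 * j + 2) := by
  induction m with
  | zero => simp
  | succ m ih =>
    rw [show 2 * (m + 1) = 2 * m + 1 + 1 by ring, sum_Icc_succ_top (by omega),
      sum_Icc_succ_top (by omega), ih, hodd, add_zero, sum_range_succ]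

theorem bridgeSum_two_mul_succ {R : Type*} [CommSemiring R] (φ : ℕ → R) (m : ℕ) :
    bridgeSum φ (2 * (m + 1)) = ∑ j ∈ range (m + 1),
      #(firstReturnPaths (2 * j + 2)) * φ (2 * j + 2) * bridgeSum φ (2 * (m - j)) := by
  rw [bridgeSum_renewal φ (by omega), sum_Icc_two_mul _ (fun j => by
    simp [card_firstReturnPaths_of_odd (Nat.not_even_iff_odd.2 (odd_two_mul_add_one j))])]
  refine sum_congr rfl fun j hj => ?_
  rw [show 2 * (m + 1) - (2 * j + 2) = 2 * (m - j) by have := mem_range.1 hj; omega]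

theorem bridgeSum_const_one (N : ℕ) : bridgeSum (fun _ => (1 : ℕ)) N = #(bridges N) := by
  simp [bridgeSum, excursionLengthProd]

theorem card_firstReturnPaths (k : ℕ) : #(firstReturnPaths (2 * k + 2)) = 2 * catalan k := by
  have hkernel := renewal_kernel_unique (b := Nat.centralBinom)
    (f := fun j => #(firstReturnPaths (2 * j + 2))) (g := fun j => 2 * catalan j)
    Nat.centralBinom_zero (fun m => ?_) centralBinom_succ_eq_sum
  · exact congrFun hkernel k
  · have h := bridgeSum_two_mul_succ (fun _ => (1 : ℕ)) m
    simp only [bridgeSum_const_one, card_bridges, mul_one] at h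
    exact h

theorem bridgeSum_zero {R : Type*} [CommSemiring R] (φ : ℕ → R) : bridgeSum φ 0 = 1 := by
  have h := card_bridges 0
  simp only [mul_zero, Nat.centralBinom_zero, card_eq_one] at h
  obtain ⟨ε, hε⟩ := h
  simp [bridgeSum, hε, excursionLengthProd]

theorem bridgeSum_eq_catalan_mul (s : ℝ) (m : ℕ) :
    bridgeSum (fun t => (1 + s ^ t) / 2) (2 * m) =
      catalan m * ∑ j ∈ range (m + 1), (s ^ 2) ^ j := by
  induction m using Nat.strong_induction_on with
  | _ m ih =>
    rcases m with _ | m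
    · simp [bridgeSum_zero]
    rw [bridgeSum_two_mul_succ, ← catalan_renewal]
    refine sum_congr rfl fun j hj => ?_
    rw [card_firstReturnPaths, ih (m - j) (by have := mem_range.1 hj; omega)]
    push_cast
    ring

section Walk

variable {Ω : Type*} [MeasurableSpace Ω] {P : Measure Ω} {X : ℕ → Ω → ℤ}

theorem ae_eq_one_or_eq_neg_one [IsProbabilityMeasure P] (hXmeas : ∀ i, Measurable (X i))
    (hXup : ∀ i, P {ω | X i ω = 1} = 1 / 2) (hXdown : ∀ i, P {ω | X i ω = -1} = 1 / 2) :
    ∀ᵐ ω ∂P, ∀ i, X i ω = 1 ∨ X i ω = -1 := by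
  refine ae_all_iff.2 fun i => ?_
  have hdisj : Disjoint {ω | X i ω = 1} {ω | X i ω = -1} :=
    Set.disjoint_left.2 fun ω h1 h2 => by simp_all
  have hunion : MeasurableSet ({ω | X i ω = 1} ∪ {ω | X i ω = -1}) :=
    (hXmeas i (measurableSet_singleton _)).union (hXmeas i (measurableSet_singleton _))
  have hfull : P ({ω | X i ω = 1} ∪ {ω | X i ω = -1}) = 1 := by
    rw [measure_union hdisj (hXmeas i (measurableSet_singleton _)), hXup, hXdown,
      ENNReal.add_halves]
  exact (measure_eq_zero_iff_ae_notMem.1 ((prob_compl_eq_zero_iff hunion).2 hfull)).mono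
    fun ω h => by simpa [or_iff_not_imp_left] using h

theorem measure_take_eq (hXind : iIndepFun X P) (hXup : ∀ i, P {ω | X i ω = 1} = 1 / 2)
    (hXdown : ∀ i, P {ω | X i ω = -1} = 1 / 2) {N : ℕ} {ε : ℕ → ℤ} (hε : ε ∈ steps N) :
    P {ω | take N (X · ω) = ε} = (1 / 2) ^ N := by
  have hset : {ω | take N (X · ω) = ε} = ⋂ i ∈ range N, X i ⁻¹' {ε i} := by
    ext ω
    simp only [Set.mem_ofPred_eq, Set.mem_iInter, Set.mem_preimage, Set.mem_singleton_iff,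
      mem_range]
    constructor
    · rintro rfl i hi
      simp [take, hi]
    · intro h
      funext i
      by_cases hi : i < N
      · simp [take, hi, h i hi]
      · simp [take, hi, (mem_steps.1 hε).2 i (not_lt.1 hi)]
  rw [hset, hXind.measure_inter_preimage_eq_mul _ fun i _ => measurableSet_singleton _,
    prod_congr rfl fun i hi => ?_, prod_const, card_range]
  rcases (mem_steps.1 hε).1 i (mem_range.1 hi) with h | h <;> rw [h]
  exacts [hXup i, hXdown i]

theorem integral_comp_take [IsProbabilityMeasure P] (hXmeas : ∀ i, Measurable (X i))
    (hXind : iIndepFun X P)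
    (hXup : ∀ i, P {ω | X i ω = 1} = 1 / 2) (hXdown : ∀ i, P {ω | X i ω = -1} = 1 / 2)
    (N : ℕ) (G : (ℕ → ℤ) → ℝ) :
    ∫ ω, G (take N (X · ω)) ∂P = (1 / 2) ^ N * ∑ ε ∈ steps N, G ε := by
  have hmeas : ∀ ε, MeasurableSet {ω | take N (X · ω) = ε} := fun ε =>
    measurable_pi_lambda (fun ω => take N (X · ω)) (fun i => by
      by_cases hi : i < N
      · simpa [take, hi] using hXmeas i
      · simp [take, hi]) (measurableSet_singleton ε)
  calc ∫ ω, G (take N (X · ω)) ∂P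
      = ∫ ω, ∑ ε ∈ steps N, {ω | take N (X · ω) = ε}.indicator (fun _ => G ε) ω ∂P := by
        refine integral_congr_ae ((ae_eq_one_or_eq_neg_one hXmeas hXup hXdown).mono
          fun ω hω => ?_)
        have hstep : take N (X · ω) ∈ steps N :=
          mem_steps.2 ⟨fun i hi => by simpa [take, hi] using hω i,
            fun i hi => by simp [take, not_lt.2 hi]⟩
        simp [Set.indicator_apply, hstep]
    _ = ∑ ε ∈ steps N, (1 / 2) ^ N * G ε := by
        rw [integral_finsetSum _ fun ε _ =>
          (integrable_const _).indicator (hmeas ε)]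
        refine sum_congr rfl fun ε hε => ?_
        rw [integral_indicator_const _ (hmeas ε), measureReal_def,
          measure_take_eq hXind hXup hXdown hε, smul_eq_mul]
        simp
    _ = _ := (mul_sum _ _ _).symm

theorem setIntegral_comp_take [IsProbabilityMeasure P] (hXmeas : ∀ i, Measurable (X i))
    (hXind : iIndepFun X P)
    (hXup : ∀ i, P {ω | X i ω = 1} = 1 / 2) (hXdown : ∀ i, P {ω | X i ω = -1} = 1 / 2)
    (N : ℕ) (G : (ℕ → ℤ) → ℝ) :
    ∫ ω in {ω | partialSum (X · ω) N = 0}, G (take N (X · ω)) ∂P =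
      (1 / 2) ^ N * ∑ ε ∈ bridges N, G ε := by
  have hmeas : MeasurableSet {ω | partialSum (X · ω) N = 0} :=
    (Finset.measurable_sum _ fun i _ => hXmeas i) (measurableSet_singleton 0)
  rw [← integral_indicator hmeas, bridges, sum_filter,
    ← integral_comp_take hXmeas hXind hXup hXdown]
  congr 1
  funext ω
  simp [Set.indicator_apply, partialSum_take _ le_rfl]

end Walk

theorem excursionProd_eq_excursionLengthProd (σ : ℕ → ℤ) (q : ℝ) (N : ℕ) :
    excursionProd σ q N =
      excursionLengthProd (fun t => (1 + Real.exp (-(q / N)) ^ t) / 2) σ N :=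
  prod_congr rfl fun n _ => by
    rw [← Nat.cast_sub (prevZero_le σ n), mul_comm (-(q / N)), Real.exp_nat_mul]

theorem setIntegral_excursionProd_div_measure_eq {Ω : Type*} [MeasurableSpace Ω] (P : Measure Ω)
    [IsProbabilityMeasure P] (X : ℕ → Ω → ℤ) (hXmeas : ∀ i, Measurable (X i))
    (hXind : iIndepFun X P) (hXup : ∀ i, P {ω | X i ω = 1} = 1 / 2)
    (hXdown : ∀ i, P {ω | X i ω = -1} = 1 / 2) (S : ℕ → Ω → ℤ)
    (hS : ∀ n ω, S n ω = ∑ i ∈ range n, X i ω) (q : ℝ) (m : ℕ) :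
    (∫ ω in {ω | S (2 * m) ω = 0}, excursionProd (fun n => S n ω) q (2 * m) ∂P) /
        (P {ω | S (2 * m) ω = 0}).toReal =
      (∑ j ∈ range (m + 1), Real.exp (-(q / m)) ^ j) / (m + 1) := by
  set N := 2 * m
  have hset : {ω | S N ω = 0} = {ω | partialSum (X · ω) N = 0} := by
    ext ω
    simp [hS, partialSum]
  have hnum : ∫ ω in {ω | S N ω = 0}, excursionProd (fun n => S n ω) q N ∂P =
      (1 / 2) ^ N * bridgeSum (fun t => (1 + Real.exp (-(q / N)) ^ t) / 2) N := by
    rw [hset, bridgeSum, ← setIntegral_comp_take hXmeas hXind hXup hXdown]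
    refine setIntegral_congr_fun ?_ fun ω _ => ?_
    · exact (Finset.measurable_sum _ fun i _ => hXmeas i) (measurableSet_singleton 0)
    rw [excursionProd_eq_excursionLengthProd]
    exact excursionLengthProd_congr _ fun n hn => by rw [hS, partialSum_take _ hn, partialSum]
  have hden : (P {ω | S N ω = 0}).toReal = (1 / 2) ^ N * #(bridges N) := by
    have h := setIntegral_comp_take hXmeas hXind hXup hXdown N fun _ => 1
    rw [setIntegral_const, smul_eq_mul, mul_one, sum_const, nsmul_eq_mul, mul_one] at h
    rw [hset, ← measureReal_def, h]
  have hsq : Real.exp (-(q / N)) ^ 2 = Real.exp (-(q / m)) := by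
    rw [← Real.exp_nat_mul]
    congr 1
    simp only [N]
    push_cast
    ring
  have hcat : (catalan m : ℝ) ≠ 0 := Nat.cast_ne_zero.2 <| right_ne_zero_of_mul <|
    (succ_mul_catalan_eq_centralBinom m).symm ▸ m.centralBinom_ne_zero
  rw [hnum, hden, bridgeSum_eq_catalan_mul, card_bridges, hsq,
    ← succ_mul_catalan_eq_centralBinom, mul_div_mul_left _ _ (by positivity)]
  push_cast
  rw [mul_comm _ (catalan m : ℝ), mul_div_mul_left _ _ hcat]

theorem tendsto_geom_sum_exp_div {q : ℝ} (hq : q ≠ 0) :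
    Tendsto (fun m : ℕ => (∑ j ∈ range (m + 1), Real.exp (-(q / m)) ^ j) / (m + 1)) atTop
      (nhds ((1 - Real.exp (-q)) / q)) := by
  set F : ℝ → ℝ := fun t => (Real.exp (t - q) - 1) / (t⁻¹ * (Real.exp t - 1) * (t - q))
  have hslope : Tendsto (fun t : ℝ => t⁻¹ * (Real.exp t - 1)) (nhdsWithin 0 {0}ᶜ) (nhds 1) := by
    simpa [hasDerivAt_iff_tendsto_slope_zero] using Real.hasDerivAt_exp 0
  have hF : Tendsto F (nhdsWithin 0 {0}ᶜ) (nhds ((1 - Real.exp (-q)) / q)) := by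
    have hcont : ∀ g : ℝ → ℝ, Continuous g → Tendsto g (nhdsWithin 0 {0}ᶜ) (nhds (g 0)) :=
      fun g hg => hg.continuousAt.tendsto.mono_left nhdsWithin_le_nhds
    have h := (hcont (fun t => Real.exp (t - q) - 1) (by fun_prop)).div
      (hslope.mul (hcont (fun t => t - q) (by fun_prop))) (by simpa using hq)
    rwa [zero_sub, one_mul, div_neg, ← neg_div, neg_sub] at h
  have ht : Tendsto (fun m : ℕ => -(q / m)) atTop (nhdsWithin 0 {0}ᶜ) := by
    refine tendsto_nhdsWithin_iff.2 ⟨?_, (eventually_ge_atTop 1).mono fun m hm => ?_⟩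
    · simpa using (tendsto_const_div_atTop_nhds_zero_nat q).neg
    · have : (m : ℝ) ≠ 0 := by positivity
      simpa [this] using hq
  -- for `t = -q/m` the mean is `F t`, because `(m + 1) t = t - q`
  refine (hF.comp ht).congr' ((eventually_ge_atTop 1).mono fun m hm => ?_)
  have hm0 : (m : ℝ) ≠ 0 := by positivity
  have hexp : Real.exp (-(q / m)) ≠ 1 := by simpa [hm0] using hq
  have hpow : Real.exp (-(q / m)) ^ (m + 1) = Real.exp (-(q / m) - q) := by
    rw [← Real.exp_nat_mul]
    congr 1
    push_cast
    field_simp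
    ring
  simp only [Function.comp_apply, F]
  rw [geom_sum_eq hexp, hpow, div_div]
  congr 1
  field_simp
  ring

end SimpleRandomWalk

/-- for the symmetric simple random walk on `ℤ` started at `0` and every
`q > 0`,
`lim_{N→∞, N even} E[∏_{j≥1: τ_j≤N} (1+e^{-(q/N)(τ_j-τ_{j-1})})/2 | S_N = 0]
  = (1-e^{-q})/q`,
where `τ` are the successive return times of `S` to `0`. -/
theorem srw_excursion_limit
    {Ω : Type*} [MeasurableSpace Ω] (P : Measure Ω) [IsProbabilityMeasure P]
    (X : ℕ → Ω → ℤ) (hXmeas : ∀ i, Measurable (X i))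
    (hXind : iIndepFun X P)
    (hXup : ∀ i, P {ω | X i ω = 1} = 1 / 2)
    (hXdown : ∀ i, P {ω | X i ω = -1} = 1 / 2)
    (S : ℕ → Ω → ℤ) (hS : ∀ n ω, S n ω = ∑ i ∈ Finset.range n, X i ω)
    (q : ℝ) (hq : 0 < q) :
    Tendsto (fun m : ℕ =>
        (∫ ω in {ω | S (2 * m) ω = 0}, excursionProd (fun n => S n ω) q (2 * m) ∂P) /
          (P {ω | S (2 * m) ω = 0}).toReal)
      atTop (nhds ((1 - Real.exp (-q)) / q)) := by
  refine (SimpleRandomWalk.tendsto_geom_sum_exp_div hq.ne').congr fun m => ?_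
  exact (SimpleRandomWalk.setIntegral_excursionProd_div_measure_eq P X hXmeas hXind hXup hXdown
    S hS q m).symm
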